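/- arXiv:2410.06217 — 3 statements merged into one kernel-verified Lean document; each statement's English description precedes it below -/
import Mathlib

section
/- A finite abelian group G is cyclic if and only if the third group cohomology H^3(G, ℤ) with trivial G-action vanishes. -/
open Finset
open groupCohomology CategoryTheory Limits
universe u
variable {k G : Type u} [CommRing k] [Group G] (A : Rep.{u, u, u} k G)


theorem subsing_iff_exact : Subsingleton (groupCohomology A 3) ↔
    ((inhomogeneousCochains A).sc' 2 3 4).Exact := by
  rw [← HomologicalComplex.exactAt_iff' _ 2 3 4 (by simp) (by simp),
    HomologicalComplex.exactAt_iff_isZero_homology]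
  constructor
  · intro h
    exact @ModuleCat.isZero_of_subsingleton _ _ _ h
  · intro h
    have h0 : (𝟙 ((inhomogeneousCochains A).homology 3)) = 0 := h.eq_of_src _ _
    constructor
    intro a b
    exact (congr_arg (fun f => ModuleCat.Hom.hom f a) h0).trans
      (congr_arg (fun f => ModuleCat.Hom.hom f b) h0).symm

noncomputable def fourCochainsLequiv : (inhomogeneousCochains A).X 4 ≃ₗ[k] G × G × G × G → A :=
  LinearEquiv.funCongrLeft k A <| ((Fin.consEquiv fun _ => G).symm.trans
    ((Equiv.refl G).prodCongr (((Fin.consEquiv fun _ => G).symm.trans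
      ((Equiv.refl G).prodCongr (piFinTwoEquiv fun _ => G)))))).symm

noncomputable def twoCochainsLequiv : (inhomogeneousCochains A).X 2 ≃ₗ[k] G × G → A :=
  (LinearEquiv.funCongrLeft k A (piFinTwoEquiv fun _ => G)).symm

noncomputable def threeCochainsLequiv : (inhomogeneousCochains A).X 3 ≃ₗ[k] G × G × G → A :=
  (LinearEquiv.funCongrLeft k A ((Fin.consEquiv _).symm.trans
    ((Equiv.refl G).prodCongr (piFinTwoEquiv fun _ => G)))).symm

noncomputable def dTwo : (G × G → A) →ₗ[k] G × G × G → A := (d₂₃ A).hom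

@[simp]
theorem dTwo_apply (f : G × G → A) (g : G × G × G) : dTwo A f g =
    A.ρ g.1 (f (g.2.1, g.2.2)) - f (g.1 * g.2.1, g.2.2) + f (g.1, g.2.1 * g.2.2) - f (g.1, g.2.1) :=
  rfl

theorem dTwo_comp_eq :
    dTwo A ∘ₗ twoCochainsLequiv A = threeCochainsLequiv A ∘ₗ ((inhomogeneousCochains A).d 2 3).hom :=
  congr_arg ModuleCat.Hom.hom (comp_d₂₃_eq A)

@[simps]
noncomputable def dThree : (G × G × G → A) →ₗ[k] G × G × G × G → A where
  toFun f g :=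
    A.ρ g.1 (f (g.2.1, g.2.2.1, g.2.2.2)) - f (g.1 * g.2.1, g.2.2.1, g.2.2.2)
      + f (g.1, g.2.1 * g.2.2.1, g.2.2.2) - f (g.1, g.2.1, g.2.2.1 * g.2.2.2)
      + f (g.1, g.2.1, g.2.2.1)
  map_add' x y := funext fun g => by dsimp; rw [map_add]; abel
  map_smul' r x := funext fun g => by dsimp; simp only [map_smul, smul_add, smul_sub]

theorem dThree_comp_eq :
    dThree A ∘ₗ threeCochainsLequiv A = fourCochainsLequiv A ∘ₗ ((inhomogeneousCochains A).d 3 4).hom := by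
  ext x y
  show A.ρ y.1 (x _) - x _ + x _ - x _ + x _ = _ + _
  dsimp
  rw [Fin.sum_univ_four]
  have h3 : ((3 : Fin 4) : ℕ) = 3 := rfl
  simp only [h3, Fin.val_zero, Fin.val_one, Fin.val_two, pow_zero, pow_one, pow_succ, one_mul,
    mul_one, neg_mul, neg_neg, one_smul, neg_smul, sub_eq_add_neg, add_assoc]
  rcongr i <;> fin_cases i <;> rfl

theorem dThree_comp_dTwo : dThree A ∘ₗ dTwo A = 0 := by
  have h1 := dTwo_comp_eq A
  have h2 := dThree_comp_eq A
  have h3 : ((inhomogeneousCochains A).d 3 4).hom ∘ₗ ((inhomogeneousCochains A).d 2 3).hom = 0 :=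
    congr_arg ModuleCat.Hom.hom (HomologicalComplex.d_comp_d (inhomogeneousCochains A) 2 3 4)
  ext f : 1
  obtain ⟨x, rfl⟩ := (twoCochainsLequiv A).surjective f
  have e1 := LinearMap.congr_fun h1 x
  have e2 := LinearMap.congr_fun h2 (((inhomogeneousCochains A).d 2 3).hom x)
  have e3 := LinearMap.congr_fun h3 x
  simp only [LinearMap.comp_apply, LinearEquiv.coe_coe, LinearMap.zero_apply] at e1 e2 e3 ⊢
  rw [e1, e2, e3, map_zero]

noncomputable def shortComplexH3 : ShortComplex (ModuleCat k) :=
  ShortComplex.moduleCatMk (dTwo A) (dThree A) (dThree_comp_dTwo A)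

noncomputable def shortComplexH3Iso :
    (inhomogeneousCochains A).sc' 2 3 4 ≅ shortComplexH3 A :=
  ShortComplex.isoMk (twoCochainsLequiv A).toModuleIso (threeCochainsLequiv A).toModuleIso
    (fourCochainsLequiv A).toModuleIso (ModuleCat.hom_ext (dTwo_comp_eq A))
    (ModuleCat.hom_ext (dThree_comp_eq A))

theorem subsing_iff_concrete : Subsingleton (groupCohomology A 3) ↔
    ∀ f : G × G × G → A, dThree A f = 0 → ∃ h : G × G → A, dTwo A h = f := by
  rw [subsing_iff_exact, ShortComplex.exact_iff_of_iso (shortComplexH3Iso A),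
    ShortComplex.moduleCat_exact_iff]
  rfl

section Curried
variable (G : Type) [Group G]

def d2c (h : G → G → ℤ) : G → G → G → ℤ :=
  fun a b c => h b c - h (a*b) c + h a (b*c) - h a b

def d3c (f : G → G → G → ℤ) : G → G → G → G → ℤ :=
  fun a b c d => f b c d - f (a*b) c d + f a (b*c) d - f a b (c*d) + f a b c

theorem subsing_iff_curried :
    Subsingleton (groupCohomology (Rep.trivial ℤ G ℤ) 3) ↔
      ∀ f : G → G → G → ℤ, (∀ a b c d, d3c G f a b c d = 0) →
        ∃ h : G → G → ℤ, ∀ a b c, d2c G h a b c = f a b c := by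
  rw [subsing_iff_concrete]
  constructor
  · intro H f hf
    obtain ⟨h, hh⟩ := H (fun p => f p.1 p.2.1 p.2.2) (funext fun g => by
      have := hf g.1 g.2.1 g.2.2.1 g.2.2.2
      simp only [d3c] at this
      simp only [dThree_apply, Representation.trivial_apply, Pi.zero_apply]
      show f g.2.1 g.2.2.1 g.2.2.2 - _ + _ - _ + _ = (0 : ℤ)
      linarith)
    refine ⟨fun a b => h (a, b), fun a b c => ?_⟩
    have := congrFun hh (a, b, c)
    simp only [dTwo_apply, Representation.trivial_apply] at this
    show h (b,c) - h (a*b, c) + h (a, b*c) - h (a,b) = _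
    rw [← this]
  · intro H f hf
    obtain ⟨h, hh⟩ := H (fun a b c => f (a, b, c)) (fun a b c d => by
      have := congrFun hf (a, b, c, d)
      simp only [dThree_apply, Representation.trivial_apply, Pi.zero_apply] at this
      show f (b,c,d) - f (a*b,c,d) + f (a,b*c,d) - f (a,b,c*d) + f (a,b,c) = (0:ℤ)
      rw [← this])
    refine ⟨fun p => h p.1 p.2, funext fun g => ?_⟩
    have := hh g.1 g.2.1 g.2.2
    simp only [d2c] at this
    simp only [dTwo_apply, Representation.trivial_apply]
    show h g.2.1 g.2.2 - h (g.1*g.2.1) g.2.2 + h g.1 (g.2.1*g.2.2) - h g.1 g.2.1 = _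
    rw [this]

end Curried

open Finset in
theorem cyclic_cobound (G : Type) [Group G] [Finite G] [IsCyclic G]
    (f : G → G → G → ℤ) (hf : ∀ a b c d, d3c G f a b c d = 0) :
    ∃ h : G → G → ℤ, ∀ a b c, d2c G h a b c = f a b c := by
  classical
  have : Fintype G := Fintype.ofFinite G
  set n : ℕ := Nat.card G with hn
  have hnpos : 0 < n := Nat.card_pos
  have hn0 : (n : ℚ) ≠ 0 := by positivity
  obtain ⟨σ, hσ⟩ := IsCyclic.exists_generator (α := G)
  have horder : orderOf σ = n := orderOf_eq_card_of_forall_mem_zpowers hσ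
  have hσn : σ ^ n = 1 := by rw [← horder]; exact pow_orderOf_eq_one σ
  have hL : ∀ x : G, ∃ a : ℕ, a < n ∧ σ ^ a = x := by
    intro x
    obtain ⟨a, ha⟩ := (mem_powers_iff_mem_zpowers).2 (hσ x)
    refine ⟨a % n, Nat.mod_lt _ hnpos, ?_⟩
    rw [← horder, pow_mod_orderOf]
    exact ha
  choose L hLlt hLeq using hL
  -- the ℚ-valued 2-cochain whose differential is f
  set S : G → G → ℤ := fun x y => ∑ w : G, f x y w with hS
  set c : G → G → ℚ := fun x y => -(S x y : ℚ) / n with hc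
  have hsum : ∀ x y z : G, S y z - S (x*y) z + S x (y*z) - S x y + n • f x y z = 0 := by
    intro x y z
    have h1 : ∑ w : G, f x y (z * w) = S x y := by
      exact Fintype.sum_bijective (fun w => z * w) (Group.mulLeft_bijective z)
        (fun w => f x y (z * w)) (fun w => f x y w) (fun w => rfl)
    have h2 : ∑ w : G, d3c G f x y z w = 0 := by
      simp only [hf]; simp
    simp only [d3c] at h2
    rw [Finset.sum_add_distrib, Finset.sum_sub_distrib, Finset.sum_add_distrib,
      Finset.sum_sub_distrib, h1] at h2
    simp only [Finset.sum_const, Finset.card_univ] at h2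
    rw [hS]
    have : (Fintype.card G) = n := by rw [hn, Nat.card_eq_fintype_card]
    rw [← this]
    linarith [h2]
  have hdc : ∀ x y z : G, c y z - c (x*y) z + c x (y*z) - c x y = (f x y z : ℚ) := by
    intro x y z
    have := hsum x y z
    have hcast : (S y z : ℚ) - S (x*y) z + S x (y*z) - S x y + n * f x y z = 0 := by
      exact_mod_cast congrArg (fun m : ℤ => (m : ℚ)) this
    simp only [hc]
    rw [show -(S y z : ℚ)/n - -(S (x*y) z : ℚ)/n + -(S x (y*z) : ℚ)/n - -(S x y : ℚ)/n
      = (-(S y z : ℚ) + (S (x*y) z) - (S x (y*z)) + (S x y))/n by ring]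
    rw [div_eq_iff hn0]
    linarith
  -- discrete integration
  set e : ℚ := c 1 1 with he
  set t : ℕ → ℚ := fun m => ∑ j ∈ Finset.range m, c (σ^j) σ with ht
  set μ : ℚ := t n with hμ
  set ν : ℚ := μ / n with hν
  have hνn : (n : ℚ) * ν = μ := by rw [hν]; field_simp
  -- main induction
  have ind : ∀ b a : ℕ, ∃ m : ℤ, c (σ^a) (σ^b) - e - t (a+b) + t a + t b = m := by
    intro b
    induction b with
    | zero =>
      intro a
      refine ⟨-(f (σ^a) 1 1), ?_⟩
      have h0 := hdc (σ^a) 1 1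
      simp only [mul_one, one_mul] at h0
      simp only [pow_zero, ht, Finset.range_zero, Finset.sum_empty, Nat.add_zero]
      push_cast
      linarith [h0]
    | succ b IH =>
      intro a
      obtain ⟨m, hm⟩ := IH a
      refine ⟨m + f (σ^a) (σ^b) σ, ?_⟩
      have h0 := hdc (σ^a) (σ^b) σ
      rw [← pow_add, ← pow_succ] at h0
      have e1 : t (b+1) = t b + c (σ^b) σ := Finset.sum_range_succ _ _
      have e2 : t (a+(b+1)) = t (a+b) + c (σ^(a+b)) σ := by
        rw [show a+(b+1) = (a+b)+1 by ring]
        exact Finset.sum_range_succ _ _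
      push_cast
      rw [e1, e2]
      linarith [h0, hm]
  -- periodicity of t
  have t_shift : ∀ m : ℕ, t (m + n) = t m + μ := by
    intro m
    induction m with
    | zero => simp [ht, hμ]
    | succ m IH =>
      have e1 : t (m+1+n) = t (m+n) + c (σ^(m+n)) σ := by
        rw [show m+1+n = (m+n)+1 by ring]
        exact Finset.sum_range_succ _ _
      have e2 : t (m+1) = t m + c (σ^m) σ := Finset.sum_range_succ _ _
      rw [e1, e2, IH, pow_add, hσn, mul_one]
      ring
  have t_shift_k : ∀ k m : ℕ, t (m + k*n) = t m + k*μ := by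
    intro k
    induction k with
    | zero => simp
    | succ k IH =>
      intro m
      rw [show m + (k+1)*n = (m + k*n) + n by ring, t_shift, IH]
      push_cast
      ring
  -- the integral correction
  set τ : G → ℚ := fun x => e - t (L x) + (L x : ℚ) * ν with hτ
  have main : ∀ x y : G, ∃ m : ℤ, c x y - (τ y - τ (x*y) + τ x) = m := by
    intro x y
    obtain ⟨m, hm⟩ := ind (L y) (L x)
    refine ⟨m, ?_⟩
    have hxy : σ ^ (L (x*y)) = σ ^ (L x + L y) := by
      rw [hLeq, pow_add, hLeq, hLeq]
    have hmod : (L x + L y) % n = L (x*y) := by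
      have := (pow_eq_pow_iff_modEq).1 hxy
      rw [horder] at this
      have h2 : L (x*y) % n = L (x*y) := Nat.mod_eq_of_lt (hLlt _)
      unfold Nat.ModEq at this
      omega
    have hdm := Nat.div_add_mod (L x + L y) n
    set k : ℕ := (L x + L y) / n with hk
    rw [hmod] at hdm
    have hmul : n * k = k * n := Nat.mul_comm n k
    have hdiv : L x + L y = L (x*y) + k * n := by
      rw [← hmul]; omega
    have hts : t (L x + L y) = t (L (x*y)) + k * μ := by
      rw [hdiv]; exact t_shift_k k _
    have hcd : ((L x : ℚ) + L y) = L (x*y) + k*n := by exact_mod_cast congrArg (fun m : ℕ => (m:ℚ)) hdiv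
    rw [hLeq, hLeq] at hm
    rw [hts, ← hνn] at hm
    simp only [hτ]
    linear_combination hm - ν * hcd
  refine ⟨fun x y => (main x y).choose, ?_⟩
  intro a b c'
  have sp : ∀ x y : G, ((main x y).choose : ℚ) = c x y - (τ y - τ (x*y) + τ x) :=
    fun x y => ((main x y).choose_spec).symm
  have key : ((d2c G (fun x y => (main x y).choose) a b c' : ℤ) : ℚ) = ((f a b c' : ℤ) : ℚ) := by
    simp only [d2c]
    push_cast
    rw [sp, sp, sp, sp]
    simp only [mul_assoc]
    linear_combination hdc a b c'
  exact_mod_cast key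

lemma prod_dvd_of_pairwise_coprime {ι : Type} (s : Finset ι) (f : ι → ℕ) (M : ℕ)
    (hcop : ∀ i ∈ s, ∀ j ∈ s, i ≠ j → Nat.Coprime (f i) (f j))
    (hdvd : ∀ i ∈ s, f i ∣ M) : (∏ i ∈ s, f i) ∣ M := by
  classical
  induction s using Finset.induction_on with
  | empty => simp
  | @insert a s' hnotmem ih =>
    rw [Finset.prod_insert hnotmem]
    have hca : Nat.Coprime (f a) (∏ i ∈ s', f i) :=
      Nat.Coprime.prod_right (fun j hj => hcop a (mem_insert_self a s') j
        (mem_insert_of_mem hj) (fun h => hnotmem (h ▸ hj)))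
    exact hca.mul_dvd_of_dvd_of_dvd (hdvd a (mem_insert_self a s'))
      (ih (fun i hi j hj hij => hcop i (mem_insert_of_mem hi) j (mem_insert_of_mem hj) hij)
        (fun i hi => hdvd i (mem_insert_of_mem hi)))

lemma cyclic_of_coprime {ι : Type} [Fintype ι] (nn : ι → ℕ) (h1 : ∀ i, 1 < nn i)
    (hcop : ∀ i j, i ≠ j → Nat.Coprime (nn i) (nn j)) :
    IsCyclic (∀ i, Multiplicative (ZMod (nn i))) := by
  classical
  have hnz : ∀ i, NeZero (nn i) := fun i => ⟨by have := h1 i; omega⟩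
  have hfin : ∀ i, Finite (ZMod (nn i)) := fun i => by
    have := hnz i; infer_instance
  have : Finite (∀ i, Multiplicative (ZMod (nn i))) := by
    have : ∀ i, Finite (Multiplicative (ZMod (nn i))) := fun i => hfin i
    exact Pi.finite
  set x : ∀ i, Multiplicative (ZMod (nn i)) := fun i => Multiplicative.ofAdd 1 with hx
  have hcard : Nat.card (∀ i, Multiplicative (ZMod (nn i))) = ∏ i, nn i := by
    rw [Nat.card_pi]
    congr 1
    funext i
    rw [Nat.card_congr (Multiplicative.toAdd (α := ZMod (nn i))), Nat.card_zmod]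
  apply isCyclic_of_orderOf_eq_card x
  rw [hcard]
  have hcomp : ∀ i, orderOf (x i) = nn i := by
    intro i
    rw [hx]
    rw [orderOf_ofAdd_eq_addOrderOf, ZMod.addOrderOf_one]
  have hdvd : ∀ i, nn i ∣ orderOf x := by
    intro i
    rw [← hcomp i]
    exact orderOf_dvd_of_pow_eq_one (by
      have : x ^ orderOf x = 1 := pow_orderOf_eq_one x
      exact congrFun this i)
  have h2 : (∏ i, nn i) ∣ orderOf x :=
    prod_dvd_of_pairwise_coprime Finset.univ nn (orderOf x)
      (fun i _ j _ hij => hcop i j hij) (fun i _ => hdvd i)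
  have h3 : orderOf x ∣ Nat.card (∀ i, Multiplicative (ZMod (nn i))) := orderOf_dvd_natCard x
  rw [hcard] at h3
  exact Nat.dvd_antisymm h3 h2

lemma exists_chars (G : Type) [CommGroup G] [Finite G] (hnc : ¬ IsCyclic G) :
    ∃ (p : ℕ) (φ ψ : G → ℤ) (x₀ y₀ : G), 1 < p ∧
      (∀ x y, (p:ℤ) ∣ (φ x + φ y - φ (x*y))) ∧ (∀ x y, (p:ℤ) ∣ (ψ x + ψ y - ψ (x*y))) ∧
      φ x₀ = 1 ∧ ψ x₀ = 0 ∧ φ y₀ = 0 ∧ ψ y₀ = 1 := by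
  classical
  obtain ⟨ι, hfin, nn, h1, ⟨iso⟩⟩ := CommGroup.equiv_prod_multiplicative_zmod_of_finite G
  by_cases hcop : ∀ i j, i ≠ j → Nat.Coprime (nn i) (nn j)
  · haveI := cyclic_of_coprime nn h1 hcop
    exact absurd (isCyclic_of_surjective iso.symm iso.symm.surjective) hnc
  · push_neg at hcop
    obtain ⟨i, j, hij, hncop⟩ := hcop
    set p : ℕ := Nat.gcd (nn i) (nn j) with hp
    have hppos : 0 < p := Nat.gcd_pos_of_pos_left _ (by have := h1 i; omega)
    have hp1 : 1 < p := by
      have : p ≠ 1 := hncop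
      omega
    haveI : NeZero p := ⟨by omega⟩
    haveI : Fact (1 < p) := ⟨hp1⟩
    set φ : G → ℤ := fun x =>
      ((ZMod.castHom (Nat.gcd_dvd_left (nn i) (nn j)) (ZMod p) (Multiplicative.toAdd (iso x i))).val : ℤ) with hφ
    set ψ : G → ℤ := fun x =>
      ((ZMod.castHom (Nat.gcd_dvd_right (nn i) (nn j)) (ZMod p) (Multiplicative.toAdd (iso x j))).val : ℤ) with hψ
    set x₀ : G := iso.symm (Pi.mulSingle i (Multiplicative.ofAdd (1 : ZMod (nn i)))) with hx₀
    set y₀ : G := iso.symm (Pi.mulSingle j (Multiplicative.ofAdd (1 : ZMod (nn j)))) with hy₀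
    have hval : ∀ (u v : ZMod p), (p:ℤ) ∣ ((u.val : ℤ) + v.val - (u+v).val) := by
      intro u v
      rw [ZMod.val_add]
      have hdm := Nat.div_add_mod (u.val + v.val) p
      refine ⟨((u.val + v.val)/p : ℕ), ?_⟩
      push_cast
      push_cast at hdm
      linarith
    have hhomφ : ∀ x y, (p:ℤ) ∣ (φ x + φ y - φ (x*y)) := by
      intro x y
      have : iso (x*y) i = iso x i * iso y i := by rw [map_mul]; rfl
      rw [hφ]
      simp only [this, toAdd_mul, map_add]
      exact hval _ _
    have hhomψ : ∀ x y, (p:ℤ) ∣ (ψ x + ψ y - ψ (x*y)) := by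
      intro x y
      have : iso (x*y) j = iso x j * iso y j := by rw [map_mul]; rfl
      rw [hψ]
      simp only [this, toAdd_mul, map_add]
      exact hval _ _
    refine ⟨p, φ, ψ, x₀, y₀, hp1, hhomφ, hhomψ, ?_, ?_, ?_, ?_⟩
    · simp only [hφ, hx₀, MulEquiv.apply_symm_apply, Pi.mulSingle_eq_same, toAdd_ofAdd,
        map_one, ZMod.val_one, Nat.cast_one]
    · simp only [hψ, hx₀, MulEquiv.apply_symm_apply, Pi.mulSingle_eq_of_ne (Ne.symm hij),
        toAdd_one, map_zero, ZMod.val_zero, Nat.cast_zero]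
    · simp only [hφ, hy₀, MulEquiv.apply_symm_apply, Pi.mulSingle_eq_of_ne hij,
        toAdd_one, map_zero, ZMod.val_zero, Nat.cast_zero]
    · simp only [hψ, hy₀, MulEquiv.apply_symm_apply, Pi.mulSingle_eq_same, toAdd_ofAdd,
        map_one, ZMod.val_one, Nat.cast_one]

theorem noncyclic_not_cobound (G : Type) [CommGroup G] [Finite G] (hnc : ¬ IsCyclic G) :
    ∃ f : G → G → G → ℤ, (∀ a b c d, d3c G f a b c d = 0) ∧
      ∀ h : G → G → ℤ, ¬ (∀ a b c, d2c G h a b c = f a b c) := by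
  classical
  have : Fintype G := Fintype.ofFinite G
  obtain ⟨p, φ, ψ, x₀, y₀, hp1, hφ, hψ, hφx, hψx, hφy, hψy⟩ := exists_chars G hnc
  have hppos : (0:ℚ) < p := by exact_mod_cast Nat.lt_of_lt_of_le Nat.zero_lt_one hp1.le
  have hp0 : (p:ℚ) ≠ 0 := hppos.ne'
  set Eφ : G → G → ℤ := fun x y => (φ x + φ y - φ (x*y)) / p with hEφdef
  set Eψ : G → G → ℤ := fun x y => (ψ x + ψ y - ψ (x*y)) / p with hEψdef
  have hEφ : ∀ x y, (p:ℤ) * Eφ x y = φ x + φ y - φ (x*y) :=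
    fun x y => Int.mul_ediv_cancel' (hφ x y)
  have hEψ : ∀ x y, (p:ℤ) * Eψ x y = ψ x + ψ y - ψ (x*y) :=
    fun x y => Int.mul_ediv_cancel' (hψ x y)
  set β : G → G → ℚ := fun x y => (φ x : ℚ) * ψ y / p with hβ
  set f : G → G → G → ℤ := fun x y z => Eφ x y * ψ z - φ x * Eψ y z with hfdef
  have hfβ : ∀ x y z, (f x y z : ℚ) = β y z - β (x*y) z + β x (y*z) - β x y := by
    intro x y z
    have e1 : ((p:ℚ)) * (Eφ x y : ℚ) = φ x + φ y - φ (x*y) := by exact_mod_cast hEφ x y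
    have e2 : ((p:ℚ)) * (Eψ y z : ℚ) = ψ y + ψ z - ψ (y*z) := by exact_mod_cast hEψ y z
    simp only [hfdef, hβ]
    push_cast
    field_simp
    linear_combination (ψ z : ℚ) * e1 - (φ x : ℚ) * e2
  have hcoc : ∀ a b c d, d3c G f a b c d = 0 := by
    intro a b c d
    have : ((d3c G f a b c d : ℤ) : ℚ) = 0 := by
      simp only [d3c]
      push_cast
      rw [hfβ, hfβ, hfβ, hfβ, hfβ]
      simp only [mul_assoc]
      ring
    exact_mod_cast this
  refine ⟨f, hcoc, ?_⟩
  intro h hcob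
  set c' : G → G → ℚ := fun x y => β x y - (h x y : ℚ) with hc'
  have hdc' : ∀ x y z, c' y z - c' (x*y) z + c' x (y*z) - c' x y = 0 := by
    intro x y z
    have h1 := hfβ x y z
    have h2' : ((d2c G h x y z : ℤ) : ℚ) = ((f x y z : ℤ) : ℚ) := by
      exact_mod_cast congrArg (fun m : ℤ => (m:ℚ)) (hcob x y z)
    simp only [d2c] at h2'
    push_cast at h2'
    simp only [hc']
    linarith [h1, h2']
  set n := Nat.card G with hn
  have hnpos : 0 < n := Nat.card_pos
  have hn0 : (n:ℚ) ≠ 0 := by positivity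
  have hs : ∀ x y : G, (n:ℚ) * c' x y =
      (∑ z : G, c' x z) + (∑ z : G, c' y z) - (∑ z : G, c' (x*y) z) := by
    intro x y
    have hsum : ∑ z : G, (c' y z - c' (x*y) z + c' x (y*z) - c' x y) = 0 := by
      simp [hdc']
    have hbij : ∑ z : G, c' x (y*z) = ∑ z : G, c' x z :=
      Fintype.sum_bijective (fun z => y * z) (Group.mulLeft_bijective y)
        (fun z => c' x (y*z)) (fun z => c' x z) (fun z => rfl)
    rw [Finset.sum_sub_distrib, Finset.sum_add_distrib, Finset.sum_sub_distrib, hbij] at hsum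
    simp only [Finset.sum_const, card_univ, nsmul_eq_mul] at hsum
    have hcard : (Fintype.card G : ℚ) = (n:ℚ) := by
      rw [hn, Nat.card_eq_fintype_card]
    rw [hcard] at hsum
    linarith [hsum]
  have hsymm : c' x₀ y₀ = c' y₀ x₀ := by
    have h1 := hs x₀ y₀
    have h2 := hs y₀ x₀
    rw [mul_comm y₀ x₀] at h2
    exact mul_left_cancel₀ hn0 (by linarith)
  have hval : (1:ℚ)/p = (h x₀ y₀ : ℚ) - (h y₀ x₀ : ℚ) := by
    simp only [hc', hβ] at hsymm
    rw [hφx, hψy, hφy, hψx] at hsymm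
    push_cast at hsymm
    rw [show ((1:ℚ) * 1)/p = 1/p by ring, show ((0:ℚ) * 0)/p = 0 by ring] at hsymm
    linarith [hsymm]
  set m : ℤ := h x₀ y₀ - h y₀ x₀ with hm
  have h1 : (1:ℚ) = m * p := by
    rw [hm]
    push_cast
    field_simp at hval
    linarith [hval]
  have h2 : (1:ℤ) = m * p := by exact_mod_cast h1
  have h3 : (p:ℤ) ∣ 1 := ⟨m, by linarith⟩
  have h4 := Int.le_of_dvd one_pos h3
  have : (1:ℤ) < p := by exact_mod_cast hp1
  omega


/-- A finite abelian group `G` is cyclic if and only if the third group cohomology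
`H³(G, ℤ)` with trivial `G`-action vanishes. -/
theorem stmt0 (G : Type) [CommGroup G] [Finite G] :
    IsCyclic G ↔ Subsingleton (groupCohomology (Rep.trivial ℤ G ℤ) 3) := by
  constructor
  · intro hc
    rw [subsing_iff_curried]
    exact fun f hf => cyclic_cobound G f hf
  · intro hs
    by_contra hnc
    obtain ⟨f, hcoc, hnob⟩ := noncyclic_not_cobound G hnc
    rw [subsing_iff_curried] at hs
    obtain ⟨h, hh⟩ := hs f hcoc
    exact hnob h hh
end

section
/- Let G be a finite group with H^3(G, ℤ) = 0 (trivial action) and let M be a divisible abelian group regarded as a G-module with trivial action. Then H^2(G, M) = 0. -/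
open CategoryTheory groupCohomology

section Aux

variable {G : Type} [Group G]

private lemma isZero_iff_subsingleton' {k : Type} [CommRing k] (X : ModuleCat k) :
    Limits.IsZero X ↔ Subsingleton X := by
  constructor
  · intro h
    constructor
    intro a b
    have h0 : (𝟙 X) = 0 := Limits.IsZero.eq_of_src h _ _
    calc a = (𝟙 X) a := rfl
      _ = (0 : X ⟶ X) a := by rw [h0]
      _ = 0 := rfl
      _ = (0 : X ⟶ X) b := rfl
      _ = (𝟙 X) b := by rw [h0]
      _ = b := rfl
  · intro h
    exact ModuleCat.isZero_of_subsingleton _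

private lemma bridge' {k : Type} [CommRing k] (A : Rep k G) (n : ℕ) :
    Subsingleton (groupCohomology A (n+1)) ↔
      ∀ f : (Fin (n+1) → G) → A, (inhomogeneousCochains.d A (n+1)).hom f = 0 →
        ∃ g : (Fin n → G) → A, (inhomogeneousCochains.d A n).hom g = f := by
  have h1 : (inhomogeneousCochains A).ExactAt (n+1) ↔
      ((inhomogeneousCochains A).sc' n (n+1) (n+2)).Exact := by
    apply HomologicalComplex.exactAt_iff' <;> simp
  have e1 : ((inhomogeneousCochains A).sc' n (n+1) (n+2)).f
      = (inhomogeneousCochains A).d n (n+1) := rfl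
  have e2 : ((inhomogeneousCochains A).sc' n (n+1) (n+2)).g
      = (inhomogeneousCochains A).d (n+1) (n+2) := rfl
  rw [← isZero_iff_subsingleton',
    show Limits.IsZero (groupCohomology A (n+1)) ↔ _ from
      ((inhomogeneousCochains A).exactAt_iff_isZero_homology (i := n+1)).symm, h1,
    ShortComplex.moduleCat_exact_iff]
  simp only [e1, e2, inhomogeneousCochains.d_def, CochainComplex.of.d, dif_pos (rfl : n + 1 + 1 = n + 2), eqToHom_refl,
    Category.comp_id]
  exact Iff.rfl

private lemma dd' {k : Type} [CommRing k] (A : Rep.{0} k G) (n : ℕ) (x : (Fin n → G) → A) :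
    (inhomogeneousCochains.d A (n+1)).hom ((inhomogeneousCochains.d A n).hom x) = 0 := by
  have h := (inhomogeneousCochains A).d_comp_d n (n+1) (n+2)
  rw [inhomogeneousCochains.d_def, inhomogeneousCochains.d_def] at h
  have := congrFun (congrArg (fun (φ : _ ⟶ _) => (φ : _ → _)) h) x
  simpa using this

private lemma d_comp' {A B : Type} [AddCommGroup A] [AddCommGroup B] [Module ℤ A] [Module ℤ B]
    (φ : A →ₗ[ℤ] B) (n : ℕ) (f : (Fin n → G) → A) :
    (inhomogeneousCochains.d (Rep.trivial ℤ G B) n).hom (⇑φ ∘ f)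
      = ⇑φ ∘ ((inhomogeneousCochains.d (Rep.trivial ℤ G A) n).hom f) := by
  funext g
  show ((inhomogeneousCochains.d (Rep.trivial ℤ G B) n).hom) (⇑φ ∘ f) g
    = φ (((inhomogeneousCochains.d (Rep.trivial ℤ G A) n).hom) f g)
  simp only [inhomogeneousCochains.d_hom_apply, Rep.trivial_ρ_apply, Function.comp_apply,
    map_add, map_sum]
  exact congrArg₂ (· + ·) rfl (Finset.sum_congr rfl fun j _ => (φ.map_smul _ _).symm)

variable {A : Type} [AddCommGroup A] [Module ℤ A]

private lemma d1_apply' (h : (Fin 1 → G) → (Rep.trivial ℤ G A)) (g : Fin 2 → G) :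
    (inhomogeneousCochains.d (Rep.trivial ℤ G A) 1).hom h g
      = h ![g 1] - h ![g 0 * g 1] + h ![g 0] := by
  have e0 : (fun i : Fin 1 => g i.succ) = ![g 1] := by
    funext i; fin_cases i; rfl
  have e1 : (Fin.contractNth 0 (· * ·) g) = ![g 0 * g 1] := by
    funext i; fin_cases i; simp [Fin.contractNth]
  have e2 : (Fin.contractNth 1 (· * ·) g) = ![g 0] := by
    funext i; fin_cases i; simp [Fin.contractNth]
  simp [inhomogeneousCochains.d_hom_apply, Rep.trivial_ρ_apply, Fin.sum_univ_two, e0, e1, e2,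
    pow_succ, sub_eq_add_neg, neg_smul, one_smul]
  erw [one_smul, one_smul]
  abel

private lemma d2_apply' (f : (Fin 2 → G) → (Rep.trivial ℤ G A)) (g : Fin 3 → G) :
    (inhomogeneousCochains.d (Rep.trivial ℤ G A) 2).hom f g
      = f ![g 1, g 2] - f ![g 0 * g 1, g 2] + f ![g 0, g 1 * g 2] - f ![g 0, g 1] := by
  have e0 : (fun i : Fin 2 => g i.succ) = ![g 1, g 2] := by
    funext i; fin_cases i <;> rfl
  have e1 : (Fin.contractNth 0 (· * ·) g) = ![g 0 * g 1, g 2] := by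
    funext i; fin_cases i <;> simp [Fin.contractNth]
  have e2 : (Fin.contractNth 1 (· * ·) g) = ![g 0, g 1 * g 2] := by
    funext i; fin_cases i <;> simp [Fin.contractNth]
  have e3 : (Fin.contractNth 2 (· * ·) g) = ![g 0, g 1] := by
    funext i; fin_cases i <;> simp [Fin.contractNth]
  simp [inhomogeneousCochains.d_hom_apply, Rep.trivial_ρ_apply, Fin.sum_univ_three, e0, e1, e2, e3,
    pow_succ, sub_eq_add_neg, neg_smul, one_smul]
  erw [one_smul, one_smul, one_smul]
  abel

private lemma cores' [Fintype G] (f : (Fin 2 → G) → (Rep.trivial ℤ G A))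
    (hf : (inhomogeneousCochains.d (Rep.trivial ℤ G A) 2).hom f = 0) :
    (inhomogeneousCochains.d (Rep.trivial ℤ G A) 1).hom (fun g => ∑ τ : G, f ![g 0, τ])
      = fun g => Fintype.card G • f g := by
  funext g
  rw [d1_apply']
  simp only [Matrix.cons_val_zero, Matrix.cons_val_one, Matrix.head_cons]
  have key : ∀ τ : G, f ![g 1, τ] - f ![g 0 * g 1, τ] + f ![g 0, g 1 * τ] - f ![g 0, g 1] = 0 :=
    fun τ => by
      have := congrFun hf ![g 0, g 1, τ]
      rw [d2_apply'] at this
      simp at this; exact this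
  have sum0 : (∑ τ : G,
      (f ![g 1, τ] - f ![g 0 * g 1, τ] + f ![g 0, g 1 * τ] - f ![g 0, g 1])) = 0 := by
    rw [Finset.sum_eq_zero fun τ _ => key τ]
  have reindex : (∑ τ : G, f ![g 0, g 1 * τ]) = ∑ τ : G, f ![g 0, τ] :=
    Fintype.sum_equiv (Equiv.mulLeft (g 1)) _ _ (fun τ => rfl)
  have hg : g = ![g 0, g 1] := by funext i; fin_cases i <;> rfl
  simp only [Finset.sum_add_distrib, Finset.sum_sub_distrib, reindex, Finset.sum_const,
    Finset.card_univ, smul_eq_mul] at sum0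
  rw [← hg] at sum0
  exact sub_eq_zero.mp sum0

private lemma ext_hom' {M : Type} [AddCommGroup M]
    (hdiv : ∀ (m : M) (n : ℕ), 0 < n → ∃ m' : M, n • m' = m) (x : M) :
    ∃ φ : ℚ →ₗ[ℤ] M, φ 1 = x := by
  letI : DivisibleBy M ℕ :=
    { div := fun a n => if h : 0 < n then (hdiv a n h).choose else 0
      div_zero := fun a => by simp
      div_cancel := fun {n} a hn => by
        simp only [dif_pos (Nat.pos_of_ne_zero hn)]
        exact (hdiv a n (Nat.pos_of_ne_zero hn)).choose_spec }
  letI : DivisibleBy M ℤ := AddGroup.divisibleByIntOfDivisibleByNat M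
  have baer : Module.Baer ℤ M := Module.Baer.of_divisible M
  have inj : Module.Injective ℤ M := baer.injective
  obtain ⟨φ, hφ⟩ := inj.out ((Int.castAddHom ℚ).toIntLinearMap)
    (fun a b hab => by simpa using hab) (LinearMap.toSpanSingleton ℤ M x)
  exact ⟨φ, by simpa using hφ 1⟩

end Aux

/-- If `G` is a finite group with `H³(G, ℤ) = 0` (trivial action) and `M` is a divisible
abelian group with trivial `G`-action, then `H²(G, M) = 0`. -/
theorem stmt3 (G : Type) [Group G] [Finite G]
    (hG : Subsingleton (groupCohomology (Rep.trivial ℤ G ℤ) 3))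
    (M : Type) [AddCommGroup M]
    (hdiv : ∀ (m : M) (n : ℕ), 0 < n → ∃ m' : M, n • m' = m) :
    Subsingleton (groupCohomology (Rep.trivial ℤ G M) 2) := by
  classical
  letI : Fintype G := Fintype.ofFinite G
  refine (bridge' (Rep.trivial ℤ G M) 1).mpr ?_
  intro f hf
  -- the free module `L` on the pairs, mapping onto the values of `f`
  let π : ((Fin 2 → G) → ℤ) →ₗ[ℤ] M :=
    { toFun := fun v => ∑ p : Fin 2 → G, v p • f p
      map_add' := fun v₁ v₂ => by
        simp [add_smul, Finset.sum_add_distrib]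
      map_smul' := fun z v => by
        simp [mul_smul, Finset.smul_sum] }
  let ℓ : (Fin 2 → G) → ((Fin 2 → G) → ℤ) := fun p => Pi.single p 1
  have hπℓ : ∀ p, π (ℓ p) = f p := fun p => by
    show (∑ q : Fin 2 → G, ℓ p q • f q) = f p
    rw [Finset.sum_eq_single_of_mem p (Finset.mem_univ p)]
    · show (Pi.single p 1 : (Fin 2 → G) → ℤ) p • f p = f p
      rw [Pi.single_eq_same, one_smul]
    · intro q _ hq
      show (Pi.single p 1 : (Fin 2 → G) → ℤ) q • f q = 0
      rw [Pi.single_eq_of_ne hq, zero_smul]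
  have hπℓf : ⇑π ∘ ℓ = f := funext hπℓ
  have hdlK : ∀ g, ((inhomogeneousCochains.d (Rep.trivial ℤ G ((Fin 2 → G) → ℤ)) 2).hom ℓ) g
      ∈ LinearMap.ker π := fun g => by
    rw [LinearMap.mem_ker]
    have h2 := congrFun (d_comp' π 2 ℓ) g
    rw [hπℓf] at h2
    exact h2.symm.trans (congrFun hf g)
  set K := LinearMap.ker π with hK
  let c : (Fin 3 → G) → K :=
    fun g => ⟨(inhomogeneousCochains.d (Rep.trivial ℤ G ((Fin 2 → G) → ℤ)) 2).hom ℓ g, hdlK g⟩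
  have hsc : ⇑K.subtype ∘ c = (inhomogeneousCochains.d (Rep.trivial ℤ G ((Fin 2 → G) → ℤ)) 2).hom ℓ :=
    funext fun g => rfl
  have hc : (inhomogeneousCochains.d (Rep.trivial ℤ G K) 3).hom c = 0 := by
    funext g
    have h3 := congrFun (d_comp' K.subtype 3 c) g
    rw [hsc] at h3
    have h4 := congrFun (dd' (Rep.trivial ℤ G ((Fin 2 → G) → ℤ)) 2 ℓ) g
    have h5 : (⇑K.subtype ∘ (inhomogeneousCochains.d (Rep.trivial ℤ G K) 3).hom c) g = 0 := by
      rw [← h3]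
      exact h4
    exact Subtype.ext h5
  -- `K` is free and finitely generated, so `hG` provides integral primitives
  haveI : Module.Finite ℤ K := Module.Finite.iff_fg.mpr (IsNoetherian.noetherian _)
  haveI : Module.Free ℤ K := Module.free_of_finite_type_torsion_free'
  set b := Module.Free.chooseBasis ℤ K with hb
  have hint := (bridge' (Rep.trivial ℤ G ℤ) 2).mp hG
  have hexist : ∀ i, ∃ u : (Fin 2 → G) → ℤ,
      (inhomogeneousCochains.d (Rep.trivial ℤ G ℤ) 2).hom u = ⇑(b.coord i) ∘ c := fun i => by
    refine hint _ ?_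
    rw [d_comp' (b.coord i) 3 c, hc]
    funext g
    exact map_zero (b.coord i)
  choose u hu using hexist
  let U : (Fin 2 → G) → K := fun p => ∑ i, u i p • b i
  have hcoordU : ∀ i, ⇑(b.coord i) ∘ U = u i := fun i => by
    funext p
    show b.coord i (∑ j, u j p • b j) = u i p
    rw [map_sum]
    rw [Finset.sum_eq_single_of_mem i (Finset.mem_univ i)]
    · simp
    · intro j _ hj
      rw [map_smul, b.coord_apply, b.repr_self, Finsupp.single_eq_of_ne hj.symm, smul_zero]
  have hU : (inhomogeneousCochains.d (Rep.trivial ℤ G K) 2).hom U = c := by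
    funext g
    apply b.repr.injective
    ext i
    have h4 := congrFun (d_comp' (b.coord i) 2 U) g
    rw [hcoordU] at h4
    calc b.repr ((inhomogeneousCochains.d (Rep.trivial ℤ G K) 2).hom U g) i
        = b.coord i ((inhomogeneousCochains.d (Rep.trivial ℤ G K) 2).hom U g) := rfl
      _ = (inhomogeneousCochains.d (Rep.trivial ℤ G ℤ) 2).hom (u i) g := h4.symm
      _ = b.coord i (c g) := congrFun (hu i) g
      _ = b.repr (c g) i := rfl
  -- the integral cocycle `w`, mapping onto `f` under `π`
  let w : (Fin 2 → G) → ((Fin 2 → G) → ℤ) := fun p => ℓ p - (U p : (Fin 2 → G) → ℤ)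
  have hw : (inhomogeneousCochains.d (Rep.trivial ℤ G ((Fin 2 → G) → ℤ)) 2).hom w = 0 := by
    have hwdef : w = ℓ - (⇑K.subtype ∘ U) := rfl
    rw [hwdef, map_sub, d_comp' K.subtype 2 U, hU, hsc, sub_self]
  have hπw : ∀ p, π (w p) = f p := fun p => by
    have : π (w p) = π (ℓ p) - π (U p) := map_sub π _ _
    rw [this, LinearMap.mem_ker.mp (U p).2, sub_zero]
    exact hπℓ p
  -- extend `π` rationally using divisibility of `M`
  choose φ hφ using fun p : Fin 2 → G => ext_hom' hdiv (f p)
  let Ψ : ((Fin 2 → G) → ℚ) →ₗ[ℤ] M :=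
    { toFun := fun v => ∑ p : Fin 2 → G, φ p (v p)
      map_add' := fun v₁ v₂ => by simp [Finset.sum_add_distrib]
      map_smul' := fun z v => by
        simp only [RingHom.id_apply]
        rw [Finset.smul_sum]
        refine Finset.sum_congr rfl fun p _ => ?_
        show φ p ((z • v) p) = z • φ p (v p)
        rw [Pi.smul_apply, map_smul] }
  let ιL : ((Fin 2 → G) → ℤ) →ₗ[ℤ] ((Fin 2 → G) → ℚ) :=
    { toFun := fun v p => (v p : ℚ)
      map_add' := fun v₁ v₂ => by
        funext p
        show (((v₁ + v₂) p : ℤ) : ℚ) = ((v₁ p : ℤ) : ℚ) + ((v₂ p : ℤ) : ℚ)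
        rw [Pi.add_apply]
        push_cast
        ring
      map_smul' := fun z v => by
        funext p
        show (((z • v) p : ℤ) : ℚ) = z • ((v p : ℤ) : ℚ)
        rw [Pi.smul_apply, zsmul_eq_mul, zsmul_eq_mul]
        push_cast
        ring }
  have hΨι : ∀ v, Ψ (ιL v) = π v := fun v => by
    show (∑ p : Fin 2 → G, φ p ((v p : ℤ) : ℚ)) = ∑ p : Fin 2 → G, v p • f p
    refine Finset.sum_congr rfl fun p _ => ?_
    have : ((v p : ℤ) : ℚ) = (v p : ℤ) • (1 : ℚ) := by
      rw [zsmul_eq_mul, mul_one]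
    rw [this, map_smul, hφ p]
  -- the rational cocycle `q` and its primitive
  let q : (Fin 2 → G) → ((Fin 2 → G) → ℚ) := ⇑ιL ∘ w
  have hq : (inhomogeneousCochains.d (Rep.trivial ℤ G ((Fin 2 → G) → ℚ)) 2).hom q = 0 := by
    show (inhomogeneousCochains.d (Rep.trivial ℤ G ((Fin 2 → G) → ℚ)) 2).hom (⇑ιL ∘ w) = 0
    rw [d_comp' ιL 2 w, hw]
    funext g
    exact map_zero ιL
  have hH := cores' q hq
  let sm : ((Fin 2 → G) → ℚ) →ₗ[ℤ] ((Fin 2 → G) → ℚ) :=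
    { toFun := fun v => ((Fintype.card G : ℚ))⁻¹ • v
      map_add' := fun v₁ v₂ => smul_add _ _ _
      map_smul' := fun z v => smul_comm _ _ _ }
  let e : (Fin 1 → G) → ((Fin 2 → G) → ℚ) := ⇑sm ∘ (fun g => ∑ τ : G, q ![g 0, τ])
  have he : (inhomogeneousCochains.d (Rep.trivial ℤ G ((Fin 2 → G) → ℚ)) 1).hom e = q := by
    show (inhomogeneousCochains.d (Rep.trivial ℤ G ((Fin 2 → G) → ℚ)) 1).hom
      (⇑sm ∘ (fun g => ∑ τ : G, q ![g 0, τ])) = q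
    rw [d_comp' sm 1 _, hH]
    funext g
    show ((Fintype.card G : ℚ))⁻¹ • ((Fintype.card G) • q g) = q g
    rw [← Nat.cast_smul_eq_nsmul ℚ, smul_smul, inv_mul_cancel₀, one_smul]
    exact_mod_cast Fintype.card_pos.ne'
  -- final assembly
  refine ⟨⇑Ψ ∘ e, ?_⟩
  rw [d_comp' Ψ 1 e, he]
  funext p
  show Ψ (ιL (w p)) = f p
  rw [hΨι, hπw]
end

section
/- Let D be an abelian group, I an index set, and for each i ∈ I let C_i be an abelian group with a homomorphism c_i : C_i → D. Let J = {1, ..., r} ⊆ I be a finite subset such that C_j = D and c_j = id for all j ∈ J; set e_j > 1 pairwise coprime for j ∈ J and e_i = 1 for i ∉ J, and N = e_1 ⋯ e_r. Suppose α = (α_i) ∈ ⊕_{i∈I} C_i satisfies Σ_i (N/e_i) · c_i(α_i) = 0. Then there exists β = (β_i) ∈ ⊕_{i∈I} C_i with Σ_i c_i(β_i) = 0 and α_i = e_i · β_i for every i. -/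
/-- Exactness at the middle in the stacky Faddeev sequence.  The index set is split as
`Fin r ⊕ K`: on the `Fin r` part the groups are `D` itself and the maps are the identity,
with pairwise coprime multiplicities `e j > 1`; on the `K` part the multiplicity is `1`
(so `N/e_i = N` there).  If `Σ_i (N/e_i) • c_i(α_i) = 0` then there is a family `β` with
`Σ_i c_i(β_i) = 0` and `α_i = e_i • β_i` for every `i`. -/
theorem stmt12 (D : Type) [AddCommGroup D] (r : ℕ) (e : Fin r → ℕ)
    (he : ∀ j, 1 < e j) (hcop : ∀ i j, i ≠ j → Nat.Coprime (e i) (e j))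
    (K : Type) [DecidableEq K] (C : K → Type) [∀ k, AddCommGroup (C k)]
    (c : ∀ k, C k →+ D) (N : ℕ) (hN : N = ∏ j, e j)
    (αJ : Fin r → D) (αK : Π₀ k, C k)
    (hα : (∑ j, (N / e j) • αJ j) + N • DFinsupp.sumAddHom (fun k => c k) αK = 0) :
    ∃ (βJ : Fin r → D) (βK : Π₀ k, C k),
      ((∑ j, βJ j) + DFinsupp.sumAddHom (fun k => c k) βK = 0) ∧
      (∀ j, αJ j = e j • βJ j) ∧ (∀ k, αK k = βK k) := by
  classical
  set S : D := DFinsupp.sumAddHom (fun k => c k) αK with hS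
  set m : Fin r → ℕ := fun j => ∏ k ∈ Finset.univ.erase j, e k with hm
  set p : Fin r → Fin r → ℕ :=
    fun j k => ∏ l ∈ (Finset.univ.erase j).erase k, e l with hp
  have hepos : ∀ j, (0:ℕ) < e j := fun j => lt_trans Nat.zero_lt_one (he j)
  have hNe : ∀ j, N = e j * m j := by
    intro j
    rw [hN, hm]
    exact (Finset.mul_prod_erase _ _ (Finset.mem_univ j)).symm
  have hdiv : ∀ j, N / e j = m j := fun j => by
    rw [hNe j, Nat.mul_div_cancel_left _ (hepos j)]
  -- e j * p j k = m k  for k ≠ j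
  have hep : ∀ j k, k ≠ j → e j * p j k = m k := by
    intro j k hkj
    have h : (Finset.univ.erase j).erase k = (Finset.univ.erase k).erase j := by
      rw [Finset.erase_right_comm]
    show e j * ∏ l ∈ (Finset.univ.erase j).erase k, e l = ∏ l ∈ Finset.univ.erase k, e l
    rw [h]
    exact Finset.mul_prod_erase _ _ (Finset.mem_erase.mpr ⟨Ne.symm hkj, Finset.mem_univ j⟩)
  -- e k * p j k = m j  for k ≠ j
  have hek : ∀ j k, k ≠ j → e k * p j k = m j := by
    intro j k hkj
    exact Finset.mul_prod_erase _ _ (Finset.mem_erase.mpr ⟨hkj, Finset.mem_univ k⟩)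
  -- Bezout coefficients
  have hcopZ : ∀ j, IsCoprime ((m j : ℤ)) ((e j : ℤ)) := by
    intro j
    rw [Nat.isCoprime_iff_coprime]
    exact Nat.Coprime.prod_left (fun k hk => hcop k j (Finset.mem_erase.mp hk).1)
  have hbez : ∀ j, ∃ a b : ℤ, a * (m j : ℤ) + b * (e j : ℤ) = 1 := fun j => hcopZ j
  choose u v huv using hbez
  -- the hypothesis, in ℤ-smul form
  have H : (∑ j, ((m j : ℤ)) • αJ j) + (N : ℤ) • S = 0 := by
    have h := hα
    simp only [hdiv] at h
    simpa [natCast_zsmul] using h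
  -- the element U j  with  e j • U j = m j • αJ j
  set U : Fin r → D := fun j =>
    -(((m j : ℤ)) • S + ∑ k ∈ Finset.univ.erase j, ((p j k : ℤ)) • αJ k) with hU
  have hUkey : ∀ j, (e j : ℤ) • U j = (m j : ℤ) • αJ j := by
    intro j
    have h1 : (m j : ℤ) • αJ j
        = -((N : ℤ) • S + ∑ k ∈ Finset.univ.erase j, ((m k : ℤ)) • αJ k) := by
      have h := H
      rw [← Finset.add_sum_erase _ _ (Finset.mem_univ j)] at h
      rw [eq_neg_iff_add_eq_zero, ← h]
      abel
    rw [h1]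
    simp only [hU]
    rw [smul_neg, neg_inj, smul_add, smul_smul, Finset.smul_sum]
    congr 1
    · rw [← Nat.cast_mul, ← hNe j]
    · refine Finset.sum_congr rfl (fun k hk => ?_)
      rw [smul_smul, ← Nat.cast_mul, hep j k (Finset.mem_erase.mp hk).1]
  -- the witnesses
  set β : Fin r → D := fun j => u j • U j + v j • αJ j with hβ
  -- divisibility and the quotient λ
  set z : ℤ := 1 - ∑ j, u j * (m j : ℤ) with hz
  have hzd : ∀ j, (e j : ℤ) ∣ z := by
    intro j
    have h1 : z = v j * (e j : ℤ) - ∑ k ∈ Finset.univ.erase j, u k * (m k : ℤ) := by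
      rw [hz, ← Finset.add_sum_erase _ _ (Finset.mem_univ j)]
      linear_combination -(huv j)
    rw [h1]
    refine dvd_sub ⟨v j, mul_comm _ _⟩ (Finset.dvd_sum ?_)
    intro k hk
    refine Dvd.dvd.mul_left ?_ (u k)
    have hd : (e j : ℕ) ∣ m k :=
      Finset.dvd_prod_of_mem _
        (Finset.mem_erase.mpr ⟨Ne.symm (Finset.mem_erase.mp hk).1, Finset.mem_univ j⟩)
    exact_mod_cast Int.natCast_dvd_natCast.mpr hd
  have hNd : (N : ℤ) ∣ z := by
    rw [hN]
    push_cast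
    refine Fintype.prod_dvd_of_coprime ?_ hzd
    intro i j hij
    simp only [Function.onFun]
    exact Nat.isCoprime_iff_coprime.mpr (hcop i j hij)
  obtain ⟨lam, hlam⟩ := hNd
  -- identity (ii): v k - ∑_{j≠k} u j * p j k = lam * m k
  have hid2 : ∀ k, v k - ∑ j ∈ Finset.univ.erase k, u j * (p j k : ℤ) = lam * (m k : ℤ) := by
    intro k
    have hek0 : (e k : ℤ) ≠ 0 := by exact_mod_cast (hepos k).ne'
    apply mul_right_cancel₀ hek0
    have h1 : (∑ j ∈ Finset.univ.erase k, u j * (p j k : ℤ)) * (e k : ℤ)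
        = ∑ j ∈ Finset.univ.erase k, u j * (m j : ℤ) := by
      rw [Finset.sum_mul]
      refine Finset.sum_congr rfl (fun j hj => ?_)
      have h := hek j k (Ne.symm (Finset.mem_erase.mp hj).1)
      rw [mul_assoc, ← Nat.cast_mul, mul_comm (p j k) (e k), h]
    have h2 : z = v k * (e k : ℤ) - ∑ j ∈ Finset.univ.erase k, u j * (m j : ℤ) := by
      rw [hz, ← Finset.add_sum_erase _ _ (Finset.mem_univ k)]
      linear_combination -(huv k)
    have h3 : (m k : ℤ) * (e k : ℤ) = (N : ℤ) := by rw [← Nat.cast_mul, mul_comm, ← hNe k]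
    rw [sub_mul, h1, mul_assoc, h3]
    linear_combination hlam - h2
  -- conclusion
  refine ⟨β, αK, ?_, ?_, fun k => rfl⟩
  · -- ∑ β + S = 0
    have hswap : ∑ j, ∑ k ∈ Finset.univ.erase j, (u j * (p j k : ℤ)) • αJ k
        = ∑ k, ∑ j ∈ Finset.univ.erase k, (u j * (p j k : ℤ)) • αJ k := by
      refine Finset.sum_comm' ?_
      intro x y
      simp only [Finset.mem_univ, Finset.mem_erase, true_and, and_true]
      exact ne_comm
    have e1 : ∀ j, β j = -((u j * (m j : ℤ)) • S)
        - (∑ k ∈ Finset.univ.erase j, (u j * (p j k : ℤ)) • αJ k) + v j • αJ j := by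
      intro j
      simp only [hβ, hU]
      rw [smul_neg, smul_add, smul_smul, Finset.smul_sum, neg_add, sub_eq_add_neg]
      simp only [smul_smul]
    have expand : (∑ j, β j) + S = z • S
        + ∑ k, (v k - ∑ j ∈ Finset.univ.erase k, u j * (p j k : ℤ)) • αJ k := by
      rw [Finset.sum_congr rfl (fun j _ => e1 j)]
      rw [Finset.sum_add_distrib, Finset.sum_sub_distrib, Finset.sum_neg_distrib,
        ← Finset.sum_smul, hswap, hz]
      simp only [sub_smul, one_smul, Finset.sum_sub_distrib, Finset.sum_smul]
      abel
    rw [expand]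
    rw [Finset.sum_congr rfl (fun k _ => by rw [hid2 k] :
      ∀ k ∈ Finset.univ, (v k - ∑ j ∈ Finset.univ.erase k, u j * (p j k : ℤ)) • αJ k
        = (lam * (m k : ℤ)) • αJ k), hlam]
    have hfin : ((N : ℤ) * lam) • S + ∑ k, (lam * (m k : ℤ)) • αJ k
        = lam • ((∑ k, ((m k : ℤ)) • αJ k) + (N : ℤ) • S) := by
      rw [smul_add, Finset.smul_sum]
      simp only [smul_smul, mul_comm ((N : ℤ)) lam]
      abel
    rw [hfin, H, smul_zero]
  · -- αJ j = e j • β j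
    intro j
    have h : (e j : ℕ) • β j = (e j : ℤ) • β j := (natCast_zsmul _ _).symm
    rw [h]
    simp only [hβ]
    rw [smul_add, smul_smul, mul_comm ((e j : ℤ)) (u j), mul_smul, hUkey j,
      smul_smul, smul_smul, mul_comm ((e j : ℤ)) (v j), ← add_smul, huv j, one_smul]
end
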